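/- arXiv:2403.06464 — 2 statements merged into one kernel-verified Lean document; each statement's English description precedes it below -/
import Mathlib

section
/- The graph ∂B is maximal monotone in ℝ²×ℝ²: (i) for all r, r', d, d' ∈ ℝ² with d ∈ ∂B(r) and d' ∈ ∂B(r'), one has (d₁−d₁')·(r₁−r₁') + (d₂−d₂')·(r₂−r₂') ≥ 0; and (ii) if a pair (r,d) ∈ ℝ²×ℝ² satisfies (d₁−d₁')·(r₁−r₁') + (d₂−d₂')·(r₂−r₂') ≥ 0 for every pair (r',d') ∈ ℝ²×ℝ² with d' ∈ ∂B(r'), then d ∈ ∂B(r). -/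
/-- The subdifferential of `β` at `t`: `q ∈ ∂β(t)` iff `q·(s−t) ≤ β(s)−β(t)` for all `s`. -/
def subBeta (β : ℝ → ℝ) (t q : ℝ) : Prop :=
  ∀ s : ℝ, q * (s - t) ≤ β s - β t

/-- `d ∈ ∂B(r)` for the extended function `B(r) = β(r₁+r₂)` on the nonnegative quadrant. -/
def subB (β : ℝ → ℝ) (r d : ℝ × ℝ) : Prop :=
  0 ≤ r.1 ∧ 0 ≤ r.2 ∧ ∀ s₁ s₂ : ℝ, 0 ≤ s₁ → 0 ≤ s₂ →
    d.1 * (s₁ - r.1) + d.2 * (s₂ - r.2) ≤ β (s₁ + s₂) - β (r.1 + r.2)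

/-- `t ∈ ∂I_{[0,∞)}(ρ)`: subdifferential of the indicator of `[0,∞)` at `ρ`. -/
def subIndicator (ρ t : ℝ) : Prop :=
  0 ≤ ρ ∧ ∀ s : ℝ, 0 ≤ s → t * (s - ρ) ≤ 0

/-!
Monotonicity is the sum of the two subgradient inequalities, each tested at the other point.

Maximality is Minty's argument. For `c = r + d`, minimise `B(y) + |y - c|² / 2` over the quadrant:
the minimum exists because `β` has an affine minorant on `[0, ∞)`, which makes the objective
coercive, and comparing the minimiser `x` with points on segments out of `x` shows
`c - x ∈ ∂B(x)`. Testing the hypothesis on `(x, c - x)` gives `-|r - x|² ≥ 0`, so `r = x`.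
-/

open Filter Topology Set RealInnerProductSpace

theorem ConvexOn.add_slope_mul_le {f : ℝ → ℝ} (hf : ConvexOn ℝ univ f) {a b t : ℝ}
    (hab : a < b) (hbt : b ≤ t) : f b + (f b - f a) / (b - a) * (t - b) ≤ f t := by
  rcases hbt.eq_or_lt with rfl | hbt
  · simp
  have hslope := hf.slope_mono_adjacent (mem_univ a) (mem_univ t) hab hbt
  have hbt' : 0 < t - b := sub_pos.mpr hbt
  rw [le_div_iff₀ hbt'] at hslope
  linarith

theorem subB_monotone {β : ℝ → ℝ} {r r' d d' : ℝ × ℝ} (hd : subB β r d) (hd' : subB β r' d') :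
    0 ≤ (d.1 - d'.1) * (r.1 - r'.1) + (d.2 - d'.2) * (r.2 - r'.2) := by
  have h := hd.2.2 r'.1 r'.2 hd'.1 hd'.2.1
  have h' := hd'.2.2 r.1 r.2 hd.1 hd.2.1
  linarith

section Prox

variable {E : Type*} [NormedAddCommGroup E]

theorem ContinuousOn.exists_isMinOn_of_norm_sub_le [ProperSpace E] {S : Set E} {g : E → ℝ}
    (hg : ContinuousOn g S) (hS : IsClosed S) (hne : S.Nonempty) {K : ℝ}
    (hK : ∀ y ∈ S, ‖y‖ - K ≤ g y) : ∃ x ∈ S, IsMinOn g S x := by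
  obtain ⟨x₀, hx₀⟩ := hne
  refine hg.exists_isMinOn' hS hx₀ ?_
  have hfar : ∀ᶠ y in cocompact E, g x₀ + K ≤ ‖y‖ :=
    tendsto_norm_cocompact_atTop.eventually_ge_atTop _
  filter_upwards [inf_le_left (b := 𝓟 S) hfar,
    inf_le_right (a := cocompact E) (mem_principal_self S)] with y hy hyS
  linarith [hK y hyS]

variable [InnerProductSpace ℝ E] {S : Set E} {f : E → ℝ}

theorem exists_norm_sub_le_add_half_norm_sub_sq {a : ℝ} {v : E}
    (hf : ∀ y ∈ S, a + ⟪v, y⟫ ≤ f y) (c : E) :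
    ∃ K, ∀ y ∈ S, ‖y‖ - K ≤ f y + ‖y - c‖ ^ 2 / 2 := by
  refine ⟨(‖v‖ + ‖c‖ + 1) ^ 2 / 2 - a, fun y hy => ?_⟩
  have hvy : -(‖v‖ * ‖y‖) ≤ ⟪v, y⟫ := (abs_le.mp (abs_real_inner_le_norm v y)).1
  have hyc : (‖y‖ - ‖c‖) ^ 2 ≤ ‖y - c‖ ^ 2 := by
    have := abs_le.mp (abs_norm_sub_norm_le y c)
    exact sq_le_sq' this.1 this.2
  nlinarith [hf y hy, sq_nonneg (‖y‖ - ‖c‖ - ‖v‖ - 1), norm_nonneg v, norm_nonneg c]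

theorem norm_add_smul_sub_sq (x s c : E) (t : ℝ) :
    ‖x + t • (s - x) - c‖ ^ 2 = ‖x - c‖ ^ 2 - 2 * t * ⟪c - x, s - x⟫ + t ^ 2 * ‖s - x‖ ^ 2 := by
  rw [show x + t • (s - x) - c = (x - c) + t • (s - x) by abel, norm_add_sq_real, norm_smul,
    inner_smul_right, ← neg_sub c x, inner_neg_left, mul_pow, Real.norm_eq_abs, sq_abs]
  ring

theorem ConvexOn.inner_sub_le_of_isMinOn (hf : ConvexOn ℝ S f) {c x : E} (hx : x ∈ S)
    (hmin : IsMinOn (fun y => f y + ‖y - c‖ ^ 2 / 2) S x) {s : E} (hs : s ∈ S) :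
    ⟪c - x, s - x⟫ ≤ f s - f x := by
  have hsmall : ∀ t : ℝ, 0 < t → t ≤ 1 →
      ⟪c - x, s - x⟫ ≤ f s - f x + t * (‖s - x‖ ^ 2 / 2) := by
    intro t ht0 ht1
    have hseg : (1 - t) • x + t • s = x + t • (s - x) := by
      rw [smul_sub, sub_smul, one_smul]; abel
    have hconv := hf.2 hx hs (by linarith : 0 ≤ 1 - t) ht0.le (by ring)
    have hval := hmin (hf.1 hx hs (by linarith : 0 ≤ 1 - t) ht0.le (by ring))
    rw [hseg] at hconv hval
    simp only [mem_ofPred_eq, norm_add_smul_sub_sq, smul_eq_mul] at hval hconv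
    nlinarith
  have hlim : Tendsto (fun t : ℝ => f s - f x + t * (‖s - x‖ ^ 2 / 2)) (𝓝[>] 0) (𝓝 (f s - f x)) :=
    (Continuous.tendsto' (by fun_prop) 0 _ (by simp)).mono_left nhdsWithin_le_nhds
  refine ge_of_tendsto hlim ?_
  filter_upwards [Ioc_mem_nhdsGT (zero_lt_one' ℝ)] with t ht using hsmall t ht.1 ht.2

theorem ConvexOn.exists_prox [ProperSpace E] (hf : ConvexOn ℝ S f) (hcont : ContinuousOn f S)
    (hS : IsClosed S) (hne : S.Nonempty) {a : ℝ} {v : E} (hminor : ∀ y ∈ S, a + ⟪v, y⟫ ≤ f y)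
    (c : E) : ∃ x ∈ S, ∀ s ∈ S, ⟪c - x, s - x⟫ ≤ f s - f x := by
  obtain ⟨K, hK⟩ := exists_norm_sub_le_add_half_norm_sub_sq hminor c
  obtain ⟨x, hx, hmin⟩ := ContinuousOn.exists_isMinOn_of_norm_sub_le
    (hcont.add (by fun_prop)) hS hne hK
  exact ⟨x, hx, fun s hs => hf.inner_sub_le_of_isMinOn hx hmin hs⟩

end Prox

-- `WithLp 2` puts the Euclidean inner product on `ℝ × ℝ`, whose own norm is the sup norm.
theorem exists_subB_sub {β : ℝ → ℝ} (hβ : ConvexOn ℝ univ β) (c : ℝ × ℝ) :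
    ∃ x, subB β x (c - x) := by
  let S : Set (WithLp 2 (ℝ × ℝ)) := {y | 0 ≤ y.fst ∧ 0 ≤ y.snd}
  let sum := WithLp.fstₗ 2 ℝ ℝ ℝ + WithLp.sndₗ 2 ℝ ℝ ℝ
  have hS : Convex ℝ S :=
    ((convex_Ici 0).linear_preimage (WithLp.fstₗ 2 ℝ ℝ ℝ)).inter
      ((convex_Ici 0).linear_preimage (WithLp.sndₗ 2 ℝ ℝ ℝ))
  have hclosed : IsClosed S :=
    (isClosed_le continuous_const (WithLp.continuous_fst 2 ℝ ℝ)).inter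
      (isClosed_le continuous_const (WithLp.continuous_snd 2 ℝ ℝ))
  have hconv : ConvexOn ℝ S fun y => β (y.fst + y.snd) :=
    (hβ.comp_linearMap sum).subset (subset_univ S) hS
  have hcont : ContinuousOn (fun y => β (y.fst + y.snd)) S :=
    ((continuousOn_univ.mp (hβ.continuousOn isOpen_univ)).comp
      sum.continuous_of_finiteDimensional).continuousOn
  have hminor : ∀ y ∈ S,
      β 0 + ⟪WithLp.toLp 2 (β 0 - β (-1), β 0 - β (-1)), y⟫ ≤ β (y.fst + y.snd) := by
    rintro y ⟨h1, h2⟩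
    have := hβ.add_slope_mul_le neg_one_lt_zero (add_nonneg h1 h2)
    simp only [WithLp.prod_inner_apply, WithLp.ofLp_fst, WithLp.ofLp_snd, RCLike.inner_apply,
      Real.ringHom_apply]
    simp only [sub_neg_eq_add, zero_add, div_one, sub_zero] at this
    linarith
  obtain ⟨x, ⟨hx1, hx2⟩, hx⟩ := hconv.exists_prox hcont hclosed ⟨0, by simp [S]⟩ hminor
    (WithLp.toLp 2 c)
  refine ⟨(x.fst, x.snd), hx1, hx2, fun s₁ s₂ hs₁ hs₂ => ?_⟩
  have := hx (WithLp.toLp 2 (s₁, s₂)) ⟨hs₁, hs₂⟩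
  simp only [WithLp.prod_inner_apply, WithLp.ofLp_sub, Prod.fst_sub, WithLp.ofLp_fst,
    RCLike.inner_apply, Real.ringHom_apply, Prod.snd_sub, WithLp.ofLp_snd, WithLp.toLp_fst,
    WithLp.toLp_snd] at this
  simp only [Prod.fst_sub, Prod.snd_sub]
  linarith

theorem subB_of_forall_monotone {β : ℝ → ℝ} (hβ : ConvexOn ℝ univ β) {r d : ℝ × ℝ}
    (H : ∀ r' d' : ℝ × ℝ, subB β r' d' →
      0 ≤ (d.1 - d'.1) * (r.1 - r'.1) + (d.2 - d'.2) * (r.2 - r'.2)) :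
    subB β r d := by
  obtain ⟨x, hx⟩ := exists_subB_sub hβ (r + d)
  have hle := H x _ hx
  simp only [Prod.fst_sub, Prod.snd_sub, Prod.fst_add, Prod.snd_add] at hle
  have hrx : r = x := Prod.ext
    (by nlinarith [sq_nonneg (r.1 - x.1), sq_nonneg (r.2 - x.2)])
    (by nlinarith [sq_nonneg (r.1 - x.1), sq_nonneg (r.2 - x.2)])
  subst hrx
  simpa only [add_sub_cancel_left] using hx

theorem subB_maximal_monotone_general (β : ℝ → ℝ)
    (hβ : ConvexOn ℝ Set.univ β) :
    (∀ r r' d d' : ℝ × ℝ, subB β r d → subB β r' d' →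
      0 ≤ (d.1 - d'.1) * (r.1 - r'.1) + (d.2 - d'.2) * (r.2 - r'.2)) ∧
    (∀ r d : ℝ × ℝ,
      (∀ r' d' : ℝ × ℝ, subB β r' d' →
        0 ≤ (d.1 - d'.1) * (r.1 - r'.1) + (d.2 - d'.2) * (r.2 - r'.2)) →
      subB β r d) :=
  ⟨fun _ _ _ _ => subB_monotone, fun _ _ => subB_of_forall_monotone hβ⟩

/-- The graph ∂B is maximal monotone in ℝ²×ℝ². -/
theorem subB_maximal_monotone (β : ℝ → ℝ)
    (hβ : ConvexOn ℝ Set.univ β) (hβ0 : β 0 = 0) :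
    (∀ r r' d d' : ℝ × ℝ, subB β r d → subB β r' d' →
      0 ≤ (d.1 - d'.1) * (r.1 - r'.1) + (d.2 - d'.2) * (r.2 - r'.2)) ∧
    (∀ r d : ℝ × ℝ,
      (∀ r' d' : ℝ × ℝ, subB β r' d' →
        0 ≤ (d.1 - d'.1) * (r.1 - r'.1) + (d.2 - d'.2) * (r.2 - r'.2)) →
      subB β r d) :=
  subB_maximal_monotone_general β hβ
end

section
/- For all r₁ > 0 and all d = (d₁,d₂) ∈ ℝ², one has d ∈ ∂B(r₁,0) if and only if d₁ ∈ ∂β(r₁) and d₂ ≤ d₁. -/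
/-! Testing `∂B(r₁, 0)` against the points `(s, 0)` gives the subgradient inequality of `β` at
`r₁` on `[0, ∞)`, a neighbourhood of `r₁ > 0`, hence on all of `ℝ` by convexity; testing against
`(0, r₁)` gives `d₂ ≤ d₁`. Conversely, `d₂ ≤ d₁` and `s₂ ≥ 0` bound the left-hand side by
`d₁ (s₁ + s₂ - r₁)`, to which the subgradient inequality at `s₁ + s₂` applies. -/

open Filter Topology

theorem ConvexOn.subBeta_of_eventually {β : ℝ → ℝ} (hβ : ConvexOn ℝ Set.univ β) {r d : ℝ}
    (h : ∀ᶠ s in 𝓝 r, d * (s - r) ≤ β s - β r) : subBeta β r d := by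
  intro s
  -- Move from `r` towards `s` until the inequality holds; convexity transports it back to `s`.
  have hchord : Tendsto (fun t : ℝ => r + t * (s - r)) (𝓝[>] 0) (𝓝 r) := by
    have : Continuous (fun t : ℝ => r + t * (s - r)) := by fun_prop
    simpa using (this.tendsto 0).mono_left nhdsWithin_le_nhds
  obtain ⟨t, ht_le, ⟨ht_pos, ht_lt⟩⟩ :=
    ((hchord.eventually h).and (Ioo_mem_nhdsGT one_pos)).exists
  have hconv : β (r + t * (s - r)) ≤ (1 - t) * β r + t * β s := by
    have := hβ.2 (Set.mem_univ r) (Set.mem_univ s) (by linarith : (0 : ℝ) ≤ 1 - t) ht_pos.le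
      (sub_add_cancel 1 t)
    simpa [smul_eq_mul, show (1 - t) * r + t * s = r + t * (s - r) by ring] using this
  have hscaled : t * (d * (s - r)) ≤ t * (β s - β r) := by
    simp only [add_sub_cancel_left] at ht_le
    linear_combination ht_le + hconv
  exact le_of_mul_le_mul_left hscaled ht_pos

theorem subB_pos_zero_general (β : ℝ → ℝ)
    (hβ : ConvexOn ℝ Set.univ β) :
    ∀ r₁ : ℝ, 0 < r₁ → ∀ d₁ d₂ : ℝ,
      subB β (r₁, 0) (d₁, d₂) ↔ (subBeta β r₁ d₁ ∧ d₂ ≤ d₁) := by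
  intro r₁ hr₁ d₁ d₂
  simp only [subB, sub_zero, add_zero]
  constructor
  · rintro ⟨-, -, h⟩
    refine ⟨hβ.subBeta_of_eventually ?_, ?_⟩
    · filter_upwards [Ioi_mem_nhds hr₁] with s hs
      simpa using h s 0 (le_of_lt hs) le_rfl
    · have htest := h 0 r₁ le_rfl hr₁.le
      simp only [zero_add, sub_self, zero_sub] at htest
      exact le_of_mul_le_mul_right (by linarith) hr₁
  · rintro ⟨h, hd⟩
    refine ⟨hr₁.le, le_rfl, fun s₁ s₂ _ hs₂ => ?_⟩
    calc d₁ * (s₁ - r₁) + d₂ * s₂ ≤ d₁ * (s₁ + s₂ - r₁) := by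
          linarith [mul_le_mul_of_nonneg_right hd hs₂]
      _ ≤ β (s₁ + s₂) - β r₁ := h _

theorem subB_pos_zero (β : ℝ → ℝ)
    (hβ : ConvexOn ℝ Set.univ β) (hβ0 : β 0 = 0) :
    ∀ r₁ : ℝ, 0 < r₁ → ∀ d₁ d₂ : ℝ,
      subB β (r₁, 0) (d₁, d₂) ↔ (subBeta β r₁ d₁ ∧ d₂ ≤ d₁) :=
  subB_pos_zero_general β hβ
end
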